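/- Let (x, x₁) be a Mannheim D-pair of type 1 in Minkowski 3-space with g = n₁ at corresponding points, T₁ = cosh θ·T - sinh θ·n, g₁ = -sinh θ·T + cosh θ·n. Then differentiating ⟨T, n₁⟩ = 0 with respect to s₁ gives k_g·(ds/ds₁) = -k_{n₁}·cosh θ + τ_{g₁}·sinh θ. -/

import Mathlib

/-! Differentiating `⟨T, n₁⟩ = 0` gives `⟨T', n₁⟩ + ⟨T, n₁'⟩ = 0`. Since `g = n₁`, the first term
is `σ k_g`; expanding `T₁` and `g₁` in terms of `T, n` (with `⟨T, T⟩ = 1`, `⟨T, n⟩ = 0`) turns the second into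
`k_{n₁} cosh θ - τ_{g₁} sinh θ`. -/

noncomputable section

open Real

/-- Minkowski inner product on ℝ³: ⟨u,v⟩ = -u₁v₁ + u₂v₂ + u₃v₃. -/
def mink (u v : Fin 3 → ℝ) : ℝ := -(u 0 * v 0) + u 1 * v 1 + u 2 * v 2

/-- Lorentzian cross product on Minkowski 3-space. -/
def lcross (u v : Fin 3 → ℝ) : Fin 3 → ℝ :=
  ![u 1 * v 2 - u 2 * v 1, u 0 * v 2 - u 2 * v 0, u 1 * v 0 - u 0 * v 1]

section Mink

variable (u v w : Fin 3 → ℝ) (a : ℝ)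

theorem mink_comm : mink u v = mink v u := by
  simp only [mink]; ring

theorem mink_add_left : mink (u + v) w = mink u w + mink v w := by
  simp only [mink, Pi.add_apply]; ring

theorem mink_add_right : mink u (v + w) = mink u v + mink u w := by
  simp only [mink, Pi.add_apply]; ring

theorem mink_sub_right : mink u (v - w) = mink u v - mink u w := by
  simp only [mink, Pi.sub_apply]; ring

theorem mink_smul_left : mink (a • u) v = a * mink u v := by
  simp only [mink, Pi.smul_apply, smul_eq_mul]; ring

theorem mink_smul_right : mink u (a • v) = a * mink u v := by
  simp only [mink, Pi.smul_apply, smul_eq_mul]; ring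

end Mink

theorem HasDerivAt.mink {u v : ℝ → Fin 3 → ℝ} {u' v' : Fin 3 → ℝ} {t : ℝ}
    (hu : HasDerivAt u u' t) (hv : HasDerivAt v v' t) :
    HasDerivAt (fun t => mink (u t) (v t)) (mink u' (v t) + mink (u t) v') t := by
  have hu' := hasDerivAt_pi.1 hu
  have hv' := hasDerivAt_pi.1 hv
  simp only [_root_.mink]
  exact ((((hu' 0).mul (hv' 0)).neg.add ((hu' 1).mul (hv' 1))).add
    ((hu' 2).mul (hv' 2))).congr_deriv (by ring)

theorem mink_deriv_add_eq_zero_of_forall_mink_eq_zero {u v : ℝ → Fin 3 → ℝ}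
    {u' v' : Fin 3 → ℝ} {t : ℝ} (hu : HasDerivAt u u' t) (hv : HasDerivAt v v' t)
    (huv : ∀ t, mink (u t) (v t) = 0) :
    mink u' (v t) + mink (u t) v' = 0 := by
  have hconst : HasDerivAt (fun t => mink (u t) (v t)) 0 t := by
    simpa only [huv] using hasDerivAt_const t (0 : ℝ)
  exact (hu.mink hv).unique hconst

theorem mannheim_type1_kg_relation_general
    (T T₁ g g₁ n n₁ : ℝ → Fin 3 → ℝ)
    (kg kn kn₁ τg₁ σ θ : ℝ → ℝ)
    (hT₁ : ∀ s, T₁ s = Real.cosh (θ s) • T s - Real.sinh (θ s) • n s)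
    (hg₁ : ∀ s, g₁ s = (-Real.sinh (θ s)) • T s + Real.cosh (θ s) • n s)
    (hgn₁ : ∀ s, g s = n₁ s)
    (hTn₁ : ∀ s, mink (T s) (n₁ s) = 0)
    (hTd : ∀ s, HasDerivAt T (σ s • (kg s • g s + kn s • n s)) s)
    (hn₁d : ∀ s, HasDerivAt n₁ (kn₁ s • T₁ s + τg₁ s • g₁ s) s)
    (h1 : ∀ s, mink (T s) (T s) = 1) (h2 : ∀ s, mink (g s) (g s) = 1)
    (h5 : ∀ s, mink (T s) (n s) = 0)
    (h6 : ∀ s, mink (g s) (n s) = 0) :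
    ∀ s, kg s * σ s = -(kn₁ s) * Real.cosh (θ s) + τg₁ s * Real.sinh (θ s) := by
  intro s
  have hderiv := mink_deriv_add_eq_zero_of_forall_mink_eq_zero (hTd s) (hn₁d s) hTn₁
  have hT'n₁ : mink (σ s • (kg s • g s + kn s • n s)) (n₁ s) = σ s * kg s := by
    rw [← hgn₁ s, mink_smul_left, mink_add_left, mink_smul_left, mink_smul_left, h2 s,
      mink_comm (n s), h6 s]
    ring
  have hTn₁' : mink (T s) (kn₁ s • T₁ s + τg₁ s • g₁ s)
      = kn₁ s * Real.cosh (θ s) - τg₁ s * Real.sinh (θ s) := by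
    simp only [hT₁ s, hg₁ s, mink_add_right, mink_sub_right, mink_smul_right, h1 s, h5 s]
    ring
  rw [hT'n₁, hTn₁'] at hderiv
  linarith

/-- Theorem 4.3 (iii): differentiating ⟨T,n₁⟩ = 0 gives
k_g·(ds/ds₁) = -k_{n₁}·cosh θ + τ_{g₁}·sinh θ.  Everything is a function of s₁. -/
theorem mannheim_type1_kg_relation
    (T T₁ g g₁ n n₁ : ℝ → Fin 3 → ℝ)
    (kg kn τg kg₁ kn₁ τg₁ σ θ : ℝ → ℝ)
    (hT₁ : ∀ s, T₁ s = Real.cosh (θ s) • T s - Real.sinh (θ s) • n s)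
    (hg₁ : ∀ s, g₁ s = (-Real.sinh (θ s)) • T s + Real.cosh (θ s) • n s)
    (hgn₁ : ∀ s, g s = n₁ s)
    (hTn₁ : ∀ s, mink (T s) (n₁ s) = 0)
    (hTd : ∀ s, HasDerivAt T (σ s • (kg s • g s + kn s • n s)) s)
    (hn₁d : ∀ s, HasDerivAt n₁ (kn₁ s • T₁ s + τg₁ s • g₁ s) s)
    (h1 : ∀ s, mink (T s) (T s) = 1) (h2 : ∀ s, mink (g s) (g s) = 1)
    (h3 : ∀ s, mink (n s) (n s) = -1)
    (h4 : ∀ s, mink (T s) (g s) = 0) (h5 : ∀ s, mink (T s) (n s) = 0)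
    (h6 : ∀ s, mink (g s) (n s) = 0)
    (h7 : ∀ s, mink (T₁ s) (T₁ s) = 1) (h8 : ∀ s, mink (g₁ s) (g₁ s) = -1)
    (h9 : ∀ s, mink (n₁ s) (n₁ s) = 1)
    (h10 : ∀ s, mink (T₁ s) (g₁ s) = 0) (h11 : ∀ s, mink (T₁ s) (n₁ s) = 0)
    (h12 : ∀ s, mink (g₁ s) (n₁ s) = 0) :
    ∀ s, kg s * σ s = -(kn₁ s) * Real.cosh (θ s) + τg₁ s * Real.sinh (θ s) :=
  mannheim_type1_kg_relation_general T T₁ g g₁ n n₁ kg kn kn₁ τg₁ σ θ hT₁ hg₁ hgn₁ hTn₁ hTd hn₁d h1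
    h2 h5 h6
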